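/- arXiv:0810.0594 — 4 statements merged into one kernel-verified Lean document; each statement's English description precedes it below -/
import Mathlib

section
/- For every nonnegative integer m and real number a, the double sum ∑_{j,k} C(2m+1, 2j) · C(m-j, k) · C(2k+2j, k+j) · (a+1)^j (a-1)^k / 2^{3(k+j)} equals the single sum 2^{-2m} ∑_k 2^k · C(2m-2k, m-k) · C(m+k, k) · (a+1)^k. -/
/-!
Put `y = (a + 1) / 8`, so that `(a - 1) / 8 = y - 1/4`. Expanding `(y - 1/4)^k` binomially turns
the inner sum over `k` into a polynomial in `y` whose coefficients are the alternating sums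
`∑ i, C(N, i) C(2(p + i), p + i) (-1/4)^i = C(2p, p) C(2N, N) / (4^N C(N + p, p))`, a disguised
Chu–Vandermonde identity that follows from Pascal's rule by induction on `N`.
Collecting the powers of `y`, the coefficient of `y^l` carries the factor
`∑ j, C(2m + 1, 2j) C(m - j, l - j)`, which `j ↦ m - j` turns into the classical
`∑ k, C(n, 2k + 1) C(k, r) = 2^(n - 2r - 1) C(n - r - 1, r)`; its left side `S(n, r)` obeys
`S(n + 2, r + 1) = 2 S(n + 1, r + 1) + S(n, r)`, again by Pascal's rule. With both closed forms the
coefficient of `y^l` is the `l`-th term of the single sum.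
-/

open Finset

namespace Nat

theorem sum_range_succ_choose_two_mul_add_one_mul (N : ℕ) (f : ℕ → ℕ) :
    ∑ k ∈ range (N + 2), (N + 1).choose (2 * k + 1) * f k
      = ∑ k ∈ range (N + 1), N.choose (2 * k + 1) * f k
        + ∑ k ∈ range (N + 1), N.choose (2 * k) * f k := by
  rw [sum_range_succ, choose_eq_zero_of_lt (by omega : N + 1 < 2 * (N + 1) + 1), zero_mul,
    add_zero, ← sum_add_distrib]
  refine sum_congr rfl fun k _ => ?_
  rw [choose_succ_succ', add_mul, add_comm]

theorem sum_range_succ_choose_two_mul_mul (N : ℕ) (f : ℕ → ℕ) :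
    ∑ k ∈ range (N + 2), (N + 1).choose (2 * k) * f k
      = ∑ k ∈ range (N + 1), N.choose (2 * k) * f k
        + ∑ k ∈ range (N + 1), N.choose (2 * k + 1) * f (k + 1) := by
  have h_even : ∑ k ∈ range (N + 1), N.choose (2 * k) * f k
      = ∑ k ∈ range (N + 1), N.choose (2 * k + 2) * f (k + 1) + f 0 := by
    rw [sum_range_succ', sum_range_succ _ N, choose_eq_zero_of_lt (by omega : N < 2 * N + 2)]
    simp [mul_add]
  rw [sum_range_succ', h_even, add_right_comm, ← sum_add_distrib]
  congr 1
  · refine sum_congr rfl fun k _ => ?_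
    rw [show 2 * (k + 1) = 2 * k + 1 + 1 by ring, choose_succ_succ', add_mul, add_comm]
  · simp

end Nat

def oddChooseSum (N r : ℕ) : ℕ := ∑ k ∈ range (N + 1), N.choose (2 * k + 1) * k.choose r

theorem oddChooseSum_add_two_add (N r : ℕ) :
    oddChooseSum (N + 2) r + oddChooseSum N r
      = 2 * oddChooseSum (N + 1) r
        + ∑ k ∈ range (N + 1), N.choose (2 * k + 1) * (k + 1).choose r := by
  have h₁ := Nat.sum_range_succ_choose_two_mul_add_one_mul N (·.choose r)
  have h₂ := Nat.sum_range_succ_choose_two_mul_add_one_mul (N + 1) (·.choose r)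
  have h₃ := Nat.sum_range_succ_choose_two_mul_mul N (·.choose r)
  simp only [oddChooseSum, add_assoc, Nat.reduceAdd] at h₁ h₂ h₃ ⊢
  omega

theorem oddChooseSum_add_two_zero (N : ℕ) :
    oddChooseSum (N + 2) 0 = 2 * oddChooseSum (N + 1) 0 := by
  simpa [oddChooseSum] using oddChooseSum_add_two_add N 0

theorem oddChooseSum_add_two_succ (N r : ℕ) :
    oddChooseSum (N + 2) (r + 1) = 2 * oddChooseSum (N + 1) (r + 1) + oddChooseSum N r := by
  have h := oddChooseSum_add_two_add N (r + 1)
  simp only [Nat.choose_succ_succ', mul_add, sum_add_distrib] at h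
  unfold oddChooseSum at *
  omega

theorem oddChooseSum_eq_zero_of_le {N r : ℕ} (h : N ≤ 2 * r) : oddChooseSum N r = 0 := by
  refine sum_eq_zero fun k _ => ?_
  rcases lt_or_ge k r with hk | hk
  · rw [Nat.choose_eq_zero_of_lt hk, mul_zero]
  · rw [Nat.choose_eq_zero_of_lt (by omega : N < 2 * k + 1), zero_mul]

theorem oddChooseSum_add_two_mul_add_one (n r : ℕ) :
    oddChooseSum (n + 2 * r + 1) r = 2 ^ n * (n + r).choose r := by
  induction r generalizing n with
  | zero =>
    induction n with
    | zero => decide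
    | succ n ih => rw [oddChooseSum_add_two_zero, ih, pow_succ]; simp [mul_comm]
  | succ r ihr =>
    induction n with
    | zero =>
      rw [show 0 + 2 * (r + 1) + 1 = 2 * r + 1 + 2 by ring, oddChooseSum_add_two_succ,
        oddChooseSum_eq_zero_of_le (by omega), ← zero_add (2 * r), ihr]
      simp
    | succ n ihn =>
      rw [show n + 1 + 2 * (r + 1) + 1 = n + 2 * r + 2 + 2 by ring, oddChooseSum_add_two_succ,
        show n + 2 * r + 2 + 1 = n + 2 * (r + 1) + 1 by ring, ihn,
        show n + 2 * r + 2 = n + 1 + 2 * r + 1 by ring, ihr,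
        show n + 1 + (r + 1) = (n + r + 1) + 1 by ring, Nat.choose_succ_succ', pow_succ,
        show n + 1 + r = n + r + 1 by ring, show n + (r + 1) = n + r + 1 by ring]
      ring

theorem sum_range_choose_two_mul_mul_choose_sub {m l : ℕ} (h : l ≤ m) :
    ∑ j ∈ range (l + 1), (2 * m + 1).choose (2 * j) * (m - j).choose (l - j)
      = 4 ^ l * (m + l).choose (2 * l) := by
  calc ∑ j ∈ range (l + 1), (2 * m + 1).choose (2 * j) * (m - j).choose (l - j)
      = ∑ j ∈ range (m + 1), (2 * m + 1).choose (2 * j) * (m - j).choose (m - l) := by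
        refine sum_subset_zero_on_sdiff (range_subset_range.mpr (by omega)) ?_ ?_
        · intro j hj
          simp only [mem_sdiff, mem_range] at hj
          rw [Nat.choose_eq_zero_of_lt (by omega : m - j < m - l), mul_zero]
        · intro j hj
          rw [mem_range] at hj
          rw [Nat.choose_symm_of_eq_add (by omega : m - j = (l - j) + (m - l))]
    _ = ∑ k ∈ range (m + 1), (2 * m + 1).choose (2 * k + 1) * k.choose (m - l) := by
        rw [← sum_range_reflect]
        refine sum_congr rfl fun k hk => ?_
        simp only [mem_range] at hk
        rw [Nat.choose_symm_of_eq_add (by omega : 2 * m + 1 = 2 * (m + 1 - 1 - k) + (2 * k + 1)),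
          show m - (m + 1 - 1 - k) = k by omega]
    _ = oddChooseSum (2 * l + 2 * (m - l) + 1) (m - l) := by
        rw [show 2 * l + 2 * (m - l) + 1 = 2 * m + 1 by omega, oddChooseSum]
        refine sum_subset_zero_on_sdiff (range_subset_range.mpr (by omega)) ?_ (fun _ _ => rfl)
        intro k hk
        simp only [mem_sdiff, mem_range] at hk
        rw [Nat.choose_eq_zero_of_lt (by omega : 2 * m + 1 < 2 * k + 1), zero_mul]
    _ = 4 ^ l * (m + l).choose (2 * l) := by
        rw [oddChooseSum_add_two_mul_add_one, pow_mul, show 2 * l + (m - l) = m + l by omega,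
          Nat.choose_symm_of_eq_add (by omega : m + l = m - l + 2 * l)]
        norm_num

theorem sum_range_choose_mul_add_pow {R : Type*} [CommSemiring R] (M : ℕ) (c : ℕ → R)
    (y z : R) :
    ∑ k ∈ range (M + 1), (M.choose k : R) * c k * (y + z) ^ k
      = ∑ s ∈ range (M + 1), (M.choose s : R) * y ^ s *
          ∑ i ∈ range (M + 1 - s), ((M - s).choose i : R) * c (s + i) * z ^ i := by
  let f s i := (M.choose s : R) * y ^ s * (((M - s).choose i : R) * c (s + i) * z ^ i)
  calc ∑ k ∈ range (M + 1), (M.choose k : R) * c k * (y + z) ^ k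
      = ∑ k ∈ range (M + 1), ∑ s ∈ range (k + 1), f s (k - s) := by
        refine sum_congr rfl fun k _ => ?_
        rw [add_pow, mul_sum]
        refine sum_congr rfl fun s hs => ?_
        have hsk : s ≤ k := by simpa [Nat.lt_succ_iff] using hs
        have h_choose : (M.choose k : R) * k.choose s = M.choose s * (M - s).choose (k - s) := by
          rw [← Nat.cast_mul, ← Nat.cast_mul, Nat.choose_mul hsk]
        calc (M.choose k : R) * c k * (y ^ s * z ^ (k - s) * k.choose s)
            = (M.choose k * k.choose s : R) * (c k * y ^ s * z ^ (k - s)) := by ring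
          _ = f s (k - s) := by simp only [f, h_choose, Nat.add_sub_cancel' hsk]; ring
    _ = _ := by rw [sum_range_diag_flip]; simp only [f, mul_sum]

variable {K : Type*} [Field K] [CharZero K]

theorem Nat.cast_centralBinom_succ (n : ℕ) :
    ((n + 1).centralBinom : K) = 2 * (2 * n + 1) * n.centralBinom / (n + 1) := by
  rw [eq_div_iff n.cast_add_one_ne_zero, mul_comm]
  exact_mod_cast succ_mul_centralBinom_succ n

theorem Nat.cast_add_succ_choose_succ (n p : ℕ) :
    ((n + (p + 1)).choose (p + 1) : K) = (n + p + 1) * (n + p).choose p / (p + 1) := by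
  rw [eq_div_iff p.cast_add_one_ne_zero, ← add_assoc]
  exact_mod_cast (add_one_mul_choose_eq (n + p) p).symm

theorem Nat.cast_succ_add_choose (n p : ℕ) :
    ((n + 1 + p).choose p : K) = (n + p + 1) * (n + p).choose p / (n + 1) := by
  have h := choose_mul_succ_eq (n + p) p
  rw [show n + p + 1 - p = n + 1 by omega] at h
  rw [eq_div_iff n.cast_add_one_ne_zero, show n + 1 + p = n + p + 1 by omega]
  exact_mod_cast h.symm.trans (mul_comm _ _)

theorem sum_range_choose_mul_centralBinom_mul_neg_quarter_pow (N p : ℕ) :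
    ∑ i ∈ range (N + 1), (N.choose i : K) * ((p + i).centralBinom * (-1 / 4 : K) ^ i)
      = p.centralBinom * N.centralBinom / (4 ^ N * (N + p).choose p) := by
  induction N generalizing p with
  | zero => simp
  | succ N ih =>
    have h_shift : ∑ i ∈ range (N + 1),
        (N.choose i : K) * ((p + (i + 1)).centralBinom * (-1 / 4 : K) ^ (i + 1))
        = -1 / 4 * ∑ i ∈ range (N + 1),
          (N.choose i : K) * ((p + 1 + i).centralBinom * (-1 / 4 : K) ^ i) := by
      rw [mul_sum]
      refine sum_congr rfl fun i _ => ?_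
      rw [show p + (i + 1) = p + 1 + i by ring, pow_succ]
      ring
    rw [sum_choose_succ_mul (fun i _ => ((p + i).centralBinom : K) * (-1 / 4 : K) ^ i), h_shift,
      ih, ih, Nat.cast_centralBinom_succ, Nat.cast_centralBinom_succ, Nat.cast_add_succ_choose_succ,
      Nat.cast_succ_add_choose]
    have : ((N + p).choose p : K) ≠ 0 := Nat.cast_ne_zero.mpr (Nat.choose_pos (by omega)).ne'
    have : (N : K) + p + 1 ≠ 0 := by exact_mod_cast (N + p).succ_ne_zero
    have := N.cast_add_one_ne_zero (R := K)
    have := p.cast_add_one_ne_zero (R := K)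
    field_simp
    ring

theorem sum_range_choose_mul_centralBinom_mul_sub_quarter_pow (M p : ℕ) (y : K) :
    ∑ k ∈ range (M + 1), (M.choose k : K) * (p + k).centralBinom * (y - 1 / 4) ^ k
      = ∑ s ∈ range (M + 1), (M.choose s : K) * y ^ s * ((p + s).centralBinom *
          (M - s).centralBinom / (4 ^ (M - s) * (M + p).choose (p + s))) := by
  rw [sub_eq_add_neg, sum_range_choose_mul_add_pow]
  refine sum_congr rfl fun s hs => ?_
  have hsM : s ≤ M := by simpa [Nat.lt_succ_iff] using hs
  simp_rw [← add_assoc, mul_assoc _ _ ((-(1 / 4) : K) ^ _)]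
  rw [show M + 1 - s = M - s + 1 by omega, neg_div',
    sum_range_choose_mul_centralBinom_mul_neg_quarter_pow, show M - s + (p + s) = M + p by omega]

theorem boros_moll_coeff_eq {m l : ℕ} (h : l ≤ m) (u : K) :
    (4 ^ l * (m + l).choose (2 * l) : ℕ) * (u / 8) ^ l *
        (l.centralBinom * (m - l).centralBinom / (4 ^ (m - l) * m.choose l) : K)
      = ((2 : K) ^ (2 * m))⁻¹ *
          (2 ^ l * (2 * m - 2 * l).choose (m - l) * (m + l).choose l * u ^ l) := by
  have h_choose :
      ((m + l).choose (2 * l) : K) * l.centralBinom = (m + l).choose l * m.choose l := by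
    rw [Nat.centralBinom_eq_two_mul_choose]
    exact_mod_cast (Nat.choose_mul (n := m + l) (by omega : l ≤ 2 * l)).trans (by
      rw [show m + l - l = m by omega, show 2 * l - l = l by omega])
  have h_four : (4 : K) ^ l = 2 ^ l * 2 ^ l := by rw [← mul_pow]; norm_num
  have h_pow : (2 : K) ^ (2 * m) = 4 ^ (m - l) * 4 ^ l := by
    rw [← pow_add, show m - l + l = m by omega, pow_mul]; norm_num
  have h_eight : (8 : K) ^ l = 4 ^ l * 2 ^ l := by rw [← mul_pow]; norm_num
  rw [show 2 * m - 2 * l = 2 * (m - l) by omega, ← Nat.centralBinom_eq_two_mul_choose, h_pow,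
    div_pow, h_eight]
  have : (m.choose l : K) ≠ 0 := Nat.cast_ne_zero.mpr (Nat.choose_pos h).ne'
  push_cast
  rw [h_four]
  field_simp
  linear_combination (u ^ l * (m - l).centralBinom) * h_choose

theorem boros_moll_row_sum {m j : ℕ} (hj : j ≤ m) (a : K) :
    ∑ k ∈ range (m + 1),
      (((2 * m + 1).choose (2 * j) : K) * ((m - j).choose k : K) *
        ((2 * k + 2 * j).choose (k + j) : K)) * (a + 1) ^ j * (a - 1) ^ k / 2 ^ (3 * (k + j))
    = ∑ s ∈ range (m + 1 - j), ((2 * m + 1).choose (2 * j) * (m - j).choose s : ℕ) *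
        ((a + 1) / 8) ^ (j + s) * ((j + s).centralBinom * (m - (j + s)).centralBinom /
          (4 ^ (m - (j + s)) * m.choose (j + s)) : K) := by
  have h_term : ∀ k, (((2 * m + 1).choose (2 * j) : K) * ((m - j).choose k : K) *
        ((2 * k + 2 * j).choose (k + j) : K)) * (a + 1) ^ j * (a - 1) ^ k / 2 ^ (3 * (k + j))
      = (2 * m + 1).choose (2 * j) * ((a + 1) / 8) ^ j *
          ((m - j).choose k * (j + k).centralBinom * ((a + 1) / 8 - 1 / 4) ^ k) := by
    intro k
    have h_eight : (2 : K) ^ (3 * (k + j)) = 8 ^ j * 8 ^ k := by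
      rw [pow_mul, add_comm, pow_add]; norm_num
    rw [Nat.centralBinom_eq_two_mul_choose, show 2 * (j + k) = 2 * k + 2 * j by ring, add_comm j k,
      show (a + 1) / 8 - 1 / 4 = (a - 1) / 8 by ring, div_pow, div_pow, h_eight]
    ring
  have h_trunc : ∀ k ∈ range (m + 1), k ∉ range (m - j + 1) →
      ((m - j).choose k : K) * (j + k).centralBinom * ((a + 1) / 8 - 1 / 4) ^ k = 0 := by
    intro k _ hk
    rw [Nat.choose_eq_zero_of_lt (by simpa [Nat.lt_succ_iff] using hk), Nat.cast_zero, zero_mul,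
      zero_mul]
  simp_rw [h_term]
  rw [← mul_sum, ← sum_subset (range_subset_range.mpr (by omega)) h_trunc,
    sum_range_choose_mul_centralBinom_mul_sub_quarter_pow, mul_sum,
    show m - j + 1 = m + 1 - j by omega]
  refine sum_congr rfl fun s _ => ?_
  rw [Nat.sub_sub, show m - j + j = m by omega, pow_add]
  push_cast
  ring

/-- The two expressions for the Boros-Moll polynomial `P_m(a)` agree: the original
double sum equals the single sum obtained via Ramanujan's Master Theorem. -/
theorem boros_moll_double_sum_eq_single_sum (m : ℕ) (a : ℝ) :
    ∑ j ∈ Finset.range (m + 1), ∑ k ∈ Finset.range (m + 1),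
      (((2 * m + 1).choose (2 * j) : ℝ) * ((m - j).choose k : ℝ) *
        ((2 * k + 2 * j).choose (k + j) : ℝ)) * (a + 1) ^ j * (a - 1) ^ k / 2 ^ (3 * (k + j))
    = ((2 : ℝ) ^ (2 * m))⁻¹ * ∑ k ∈ Finset.range (m + 1),
        (2 : ℝ) ^ k * ((2 * m - 2 * k).choose (m - k) : ℝ) * ((m + k).choose k : ℝ) *
          (a + 1) ^ k := by
  rw [sum_congr rfl fun j hj => boros_moll_row_sum (by simpa [Nat.lt_succ_iff] using hj) a,
    ← sum_range_diag_flip, mul_sum]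
  refine sum_congr rfl fun l hl => ?_
  have hlm : l ≤ m := by simpa [Nat.lt_succ_iff] using hl
  rw [← boros_moll_coeff_eq hlm, ← sum_range_choose_two_mul_mul_choose_sub hlm, Nat.cast_sum,
    sum_mul, sum_mul]
  refine sum_congr rfl fun j hj => ?_
  rw [Nat.add_sub_cancel' (by simpa [Nat.lt_succ_iff] using hj)]
end

section
/- For every nonnegative integer m, the coefficients of the polynomial ∑_k 2^k · C(2m-2k, m-k) · C(m+k, k) · (a+1)^k (expanded in powers of a) are all positive. -/
open Finset Polynomial

/-- The polynomial `∑_k 2^k C(2m-2k, m-k) C(m+k, k) (a+1)^k`, which equals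
`2^{2m} P_m(a)` where `P_m` is the Boros-Moll polynomial. -/
noncomputable def borosMollSingle (m : ℕ) : Polynomial ℚ :=
  ∑ k ∈ Finset.range (m + 1),
    Polynomial.C ((2 : ℚ) ^ k * ((2 * m - 2 * k).choose (m - k) : ℚ) *
      ((m + k).choose k : ℚ)) * (Polynomial.X + 1) ^ k

/-- All the coefficients of `∑_k 2^k C(2m-2k, m-k) C(m+k, k) (a+1)^k`, expanded in
powers of `a`, are positive. -/
theorem borosMollSingle_coeff_pos (m : ℕ) (i : ℕ) (h : i ≤ m) :
    0 < (borosMollSingle m).coeff i := by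
  rw [borosMollSingle, finset_sum_coeff]
  simp only [coeff_C_mul, Polynomial.coeff_X_add_one_pow]
  apply Finset.sum_pos'
  · intro k _
    positivity
  · refine ⟨m, Finset.mem_range.mpr (Nat.lt_succ_self m), ?_⟩
    have h1 : 0 < (m.choose i : ℚ) := by
      exact_mod_cast Nat.choose_pos h
    have h2 : 0 < (((2 * m - 2 * m).choose (m - m)) : ℚ) := by simp
    have h3 : 0 < (((m + m).choose m) : ℚ) := by
      exact_mod_cast Nat.choose_pos (by omega)
    positivity
end

section
/- For every nonnegative integer m and every real (or rational function field element) a, ∑_{i+j+k=m} [m!/(i! j! k!)] · (-m)_i · (-m - 1/2)_j · (j + 1/2)_k · ((a+1)/2)^j · ((1-a)/2)^k = ∑_{i+j=m} [m!/(i! j!)] · (1/2 - j)_j · (m+1)_i · ((-a-1)/2)^i, where (x)_n denotes the rising factorial. -/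
/-!
With `x = (a + 1) / 2` both sides are polynomials in `x`, the left one through `(1 - x) ^ k`.
Expanding `(1 - x) ^ k` binomially, the coefficient of `x ^ r` on the left becomes a double sum
over `j ≤ r ≤ s ≤ m` (where `s = j + k`) whose summand is a product of a function of `j` and a
function of `s`. The `j`-sum is the Chu–Vandermonde identity for falling factorials at `m + 1/2` and
`r - 1/2`, and the `s`-sum is the `(m - r)`-th forward difference at `r` of `k ↦ (1/2)_k / k!`.
-/

open Finset Polynomial

section

variable {R : Type*}

theorem ascPochhammer_eval_mul_eval_add [CommSemiring R] (x : R) (n k : ℕ) :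
    (ascPochhammer R n).eval x * (ascPochhammer R k).eval (x + n) =
      (ascPochhammer R (n + k)).eval x := by
  rw [← ascPochhammer_mul, eval_mul, eval_comp, eval_add, eval_X, eval_natCast]

theorem descPochhammer_eval_add [CommRing R] (x y : R) (k : ℕ) :
    (descPochhammer R k).eval (x + y) = ∑ ij ∈ antidiagonal k,
      k.choose ij.1 * ((descPochhammer R ij.1).eval x * (descPochhammer R ij.2).eval y) := by
  simp only [descPochhammer_eval_eq_ascPochhammer, ← ascPochhammer_smeval_eq_eval,
    ← descPochhammer_smeval_eq_ascPochhammer]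
  exact Ring.descPochhammer_smeval_add k (Commute.all x y)

theorem sum_mul_pow_mul_one_sub_pow [CommRing R] (f : ℕ → ℕ → R) (x : R) (m : ℕ) :
    ∑ j ∈ range (m + 1), ∑ k ∈ range (m + 1 - j), f j k * x ^ j * (1 - x) ^ k =
      ∑ r ∈ range (m + 1), (∑ j ∈ range (r + 1), ∑ s ∈ Ico r (m + 1),
        (-1) ^ (r - j) * (s - j).choose (r - j) * f j (s - j)) * x ^ r := by
  have expand (j k : ℕ) : f j k * x ^ j * (1 - x) ^ k =
      ∑ t ∈ range (k + 1), (-1) ^ t * k.choose t * f j k * x ^ (j + t) := by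
    rw [show 1 - x = -x + 1 by ring, add_pow, mul_sum]
    refine sum_congr rfl fun t _ => ?_
    rw [neg_pow, one_pow, pow_add]
    ring
  simp only [expand, sum_mul, sum_sigma']
  refine sum_nbij' (fun p ↦ ⟨p.1 + p.2.2, p.1, p.1 + p.2.1⟩)
    (fun q ↦ ⟨q.2.1, q.2.2 - q.2.1, q.1 - q.2.1⟩) ?_ ?_ ?_ ?_ ?_
  · rintro ⟨j, k, t⟩ h
    simp only [mem_sigma, mem_range, mem_Ico] at h ⊢
    omega
  · rintro ⟨r, j, s⟩ h
    simp only [mem_sigma, mem_range, mem_Ico] at h ⊢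
    omega
  · rintro ⟨j, k, t⟩ -
    simp
  · rintro ⟨r, j, s⟩ h
    simp only [mem_sigma, mem_range, mem_Ico] at h
    simp only [Sigma.mk.injEq, heq_eq_eq, true_and]
    omega
  · rintro ⟨j, k, t⟩ -
    simp only [Nat.add_sub_cancel_left]

end

noncomputable def halfPochhammer (n : ℕ) : ℝ := (ascPochhammer ℝ n).eval (1 / 2)

theorem halfPochhammer_pos (n : ℕ) : 0 < halfPochhammer n :=
  ascPochhammer_pos n _ one_half_pos

theorem halfPochhammer_succ (n : ℕ) :
    halfPochhammer (n + 1) = halfPochhammer n * (n + 1 / 2) := by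
  rw [halfPochhammer, ascPochhammer_succ_eval, add_comm (1 / 2 : ℝ)]; rfl

theorem ascPochhammer_eval_natCast_add_half (j k : ℕ) :
    (ascPochhammer ℝ k).eval ((j : ℝ) + 1 / 2) = halfPochhammer (j + k) / halfPochhammer j := by
  rw [eq_div_iff (halfPochhammer_pos j).ne', mul_comm, halfPochhammer, halfPochhammer, add_comm,
    ascPochhammer_eval_mul_eval_add]

theorem descPochhammer_eval_natCast_sub_half (j k : ℕ) :
    (descPochhammer ℝ k).eval (((j + k : ℕ) : ℝ) - 1 / 2) =
      halfPochhammer (j + k) / halfPochhammer j := by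
  rw [descPochhammer_eval_eq_ascPochhammer, ← ascPochhammer_eval_natCast_add_half]
  push_cast; ring_nf

open fwdDiff in
theorem fwdDiff_iter_halfPochhammer_div_factorial (n r : ℕ) :
    (Δ_[1])^[n] (fun k ↦ halfPochhammer k / k.factorial) r =
      (-1) ^ n * halfPochhammer r * halfPochhammer n / (r + n).factorial := by
  induction n generalizing r with
  | zero => simp [halfPochhammer]
  | succ n ih =>
    rw [Function.iterate_succ_apply', fwdDiff, ih, ih, halfPochhammer_succ, halfPochhammer_succ,
      add_right_comm, ← add_assoc, Nat.factorial_succ (r + n)]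
    have := halfPochhammer_pos r
    have := halfPochhammer_pos n
    field_simp
    push_cast
    ring

noncomputable def borosMollTerm (m j k : ℕ) : ℝ :=
  (m.factorial : ℝ) / ((m - j - k).factorial * j.factorial * k.factorial) *
    (ascPochhammer ℝ (m - j - k)).eval (-(m : ℝ)) *
    (ascPochhammer ℝ j).eval (-(m : ℝ) - 1 / 2) *
    (ascPochhammer ℝ k).eval ((j : ℝ) + 1 / 2)

theorem neg_one_pow_mul_choose_mul_borosMollTerm {m r j s : ℕ} (hjr : j ≤ r) (hrs : r ≤ s)
    (hsm : s ≤ m) :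
    (-1) ^ (r - j) * ((s - j).choose (r - j) : ℝ) * borosMollTerm m j (s - j) =
      (-1) ^ r * m.factorial / (r.factorial * halfPochhammer r) *
        (r.choose j * ((descPochhammer ℝ j).eval ((m : ℝ) + 1 / 2) *
          (descPochhammer ℝ (r - j)).eval ((r : ℝ) - 1 / 2))) *
        ((-1) ^ (m - s) * m.factorial * halfPochhammer s /
          (s.factorial * (m - s).factorial * (s - r).factorial)) := by
  obtain ⟨a, rfl⟩ := Nat.exists_eq_add_of_le hjr
  obtain ⟨b, rfl⟩ := Nat.exists_eq_add_of_le hrs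
  obtain ⟨c, rfl⟩ := Nat.exists_eq_add_of_le hsm
  have hdesc : ((j + a + b).factorial : ℝ) * (j + a + b + c).descFactorial c =
      (j + a + b + c).factorial := by
    have h := Nat.factorial_mul_descFactorial (Nat.le_add_left c (j + a + b))
    rw [Nat.add_sub_cancel] at h
    exact_mod_cast h
  rw [borosMollTerm, show j + a + b - j = a + b by omega, show j + a - j = a by omega,
    show j + a + b + c - j - (a + b) = c by omega, show j + a + b + c - (j + a + b) = c by omega,
    show j + a + b - (j + a) = b by omega, show -((j + a + b + c : ℕ) : ℝ) - 1 / 2 =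
      -((j + a + b + c : ℕ) + 1 / 2) by ring, ascPochhammer_eval_neg_eq_descPochhammer,
    ascPochhammer_eval_neg_eq_descPochhammer, descPochhammer_eval_eq_descFactorial,
    ascPochhammer_eval_natCast_add_half, descPochhammer_eval_natCast_sub_half, Nat.cast_add_choose,
    Nat.cast_add_choose]
  have := halfPochhammer_pos j
  have := halfPochhammer_pos (j + a)
  field_simp
  rw [← hdesc, add_assoc j a b]
  ring

theorem ascPochhammer_eval_half_sub_natCast (n : ℕ) :
    (ascPochhammer ℝ n).eval (1 / 2 - (n : ℝ)) = (-1) ^ n * halfPochhammer n := by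
  rw [show 1 / 2 - (n : ℝ) = -(((0 + n : ℕ) : ℝ) - 1 / 2) by push_cast; ring,
    ascPochhammer_eval_neg_eq_descPochhammer, descPochhammer_eval_natCast_sub_half, zero_add]
  simp [halfPochhammer]

theorem sum_choose_mul_descPochhammer_eval_add_half (m r : ℕ) :
    ∑ j ∈ range (r + 1), (r.choose j : ℝ) * ((descPochhammer ℝ j).eval ((m : ℝ) + 1 / 2) *
      (descPochhammer ℝ (r - j)).eval ((r : ℝ) - 1 / 2)) =
        (ascPochhammer ℝ r).eval ((m : ℝ) + 1) := by
  rw [show (m : ℝ) + 1 = (m + 1 / 2) + (r - 1 / 2) - r + 1 by ring,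
    ← descPochhammer_eval_eq_ascPochhammer, descPochhammer_eval_add,
    Nat.sum_antidiagonal_eq_sum_range_succ_mk]

theorem sum_Ico_neg_one_pow_mul_halfPochhammer (r n : ℕ) :
    ∑ s ∈ Ico r (r + n + 1), (-1) ^ (r + n - s) * ((r + n).factorial : ℝ) *
      halfPochhammer s / (s.factorial * (r + n - s).factorial * (s - r).factorial) =
        (-1) ^ n * halfPochhammer r * halfPochhammer n / n.factorial := by
  have h := fwdDiff_iter_halfPochhammer_div_factorial n r
  rw [fwdDiff_iter_eq_sum_shift] at h
  have := n.factorial_pos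
  calc _ = ((r + n).factorial / n.factorial : ℝ) * ∑ u ∈ range (n + 1),
        ((-1 : ℤ) ^ (n - u) * n.choose u) •
          (halfPochhammer (r + u • 1) / (r + u • 1).factorial) := by
        rw [sum_Ico_eq_sum_range, show r + n + 1 - r = n + 1 by omega, mul_sum]
        refine sum_congr rfl fun u hu => ?_
        have hu : u ≤ n := Nat.lt_succ_iff.mp (mem_range.mp hu)
        simp only [Nat.add_sub_add_left, Nat.add_sub_cancel_left, smul_eq_mul, mul_one,
          zsmul_eq_mul, Int.cast_mul, Int.cast_pow, Int.cast_neg, Int.cast_one, Int.cast_natCast,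
          Nat.cast_choose ℝ hu]
        field_simp
    _ = _ := by
        rw [h]
        field_simp

theorem sum_neg_one_pow_mul_choose_mul_borosMollTerm {m r : ℕ} (hrm : r ≤ m) :
    ∑ j ∈ range (r + 1), ∑ s ∈ Ico r (m + 1),
        (-1) ^ (r - j) * ((s - j).choose (r - j) : ℝ) * borosMollTerm m j (s - j) =
      (-1) ^ r * ((m.factorial : ℝ) / (r.factorial * (m - r).factorial) *
        (ascPochhammer ℝ (m - r)).eval (1 / 2 - ((m - r : ℕ) : ℝ)) *
        (ascPochhammer ℝ r).eval ((m : ℝ) + 1)) := by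
  obtain ⟨n, rfl⟩ := Nat.exists_eq_add_of_le hrm
  calc _ = ∑ j ∈ range (r + 1), ∑ s ∈ Ico r (r + n + 1),
        (-1) ^ r * ((r + n).factorial : ℝ) / (r.factorial * halfPochhammer r) *
          (r.choose j * ((descPochhammer ℝ j).eval (((r + n : ℕ) : ℝ) + 1 / 2) *
            (descPochhammer ℝ (r - j)).eval ((r : ℝ) - 1 / 2))) *
          ((-1) ^ (r + n - s) * (r + n).factorial * halfPochhammer s /
            (s.factorial * (r + n - s).factorial * (s - r).factorial)) := by
        refine sum_congr rfl fun j hj => sum_congr rfl fun s hs => ?_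
        rw [mem_range] at hj
        rw [mem_Ico] at hs
        exact neg_one_pow_mul_choose_mul_borosMollTerm (by omega) hs.1 (by omega)
    _ = (-1) ^ r * ((r + n).factorial : ℝ) / (r.factorial * halfPochhammer r) *
          (ascPochhammer ℝ r).eval (((r + n : ℕ) : ℝ) + 1) *
          ((-1) ^ n * halfPochhammer r * halfPochhammer n / n.factorial) := by
        rw [← sum_choose_mul_descPochhammer_eval_add_half,
          ← sum_Ico_neg_one_pow_mul_halfPochhammer, mul_sum (range (r + 1)), sum_mul_sum]
    _ = _ := by
        rw [Nat.add_sub_cancel_left, ascPochhammer_eval_half_sub_natCast]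
        have := halfPochhammer_pos r
        field_simp

/-- The hypergeometric form of the Boros-Moll identity:
`∑_{i+j+k=m} m!/(i!j!k!) (-m)_i (-m-1/2)_j (j+1/2)_k ((a+1)/2)^j ((1-a)/2)^k
  = ∑_{i+j=m} m!/(i!j!) (1/2-j)_j (m+1)_i ((-a-1)/2)^i`. -/
theorem boros_moll_hypergeometric_identity (m : ℕ) (a : ℝ) :
    ∑ j ∈ Finset.range (m + 1), ∑ k ∈ Finset.range (m + 1 - j),
      ((m.factorial : ℝ) /
          (((m - j - k).factorial : ℝ) * (j.factorial : ℝ) * (k.factorial : ℝ))) *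
        (ascPochhammer ℝ (m - j - k)).eval (-(m : ℝ)) *
        (ascPochhammer ℝ j).eval (-(m : ℝ) - 1 / 2) *
        (ascPochhammer ℝ k).eval ((j : ℝ) + 1 / 2) *
        ((a + 1) / 2) ^ j * ((1 - a) / 2) ^ k
    = ∑ i ∈ Finset.range (m + 1),
        ((m.factorial : ℝ) / ((i.factorial : ℝ) * ((m - i).factorial : ℝ))) *
          (ascPochhammer ℝ (m - i)).eval (1 / 2 - ((m - i : ℕ) : ℝ)) *
          (ascPochhammer ℝ i).eval ((m : ℝ) + 1) * ((-a - 1) / 2) ^ i := by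
  rw [show (1 - a) / 2 = 1 - (a + 1) / 2 by ring, show (-a - 1) / 2 = -((a + 1) / 2) by ring]
  refine (sum_mul_pow_mul_one_sub_pow (borosMollTerm m) _ m).trans
    (sum_congr rfl fun r hr => ?_)
  rw [sum_neg_one_pow_mul_choose_mul_borosMollTerm (Nat.lt_succ_iff.mp (mem_range.mp hr)),
    neg_pow ((a + 1) / 2)]
  ring
end

section
/- Let A and B be disjoint finite sets with |A| = i and |B| = j. Then the sum over all reluctant functions f from A to B of a^{c(f)}, where c(f) is the number of cycles in the functional digraph of f, equals the rising factorial (a + j)_i as a polynomial in a. -/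
open Finset Polynomial

/-- The extension of a reluctant function `f : A → A ∪ B` to a function `ℕ → ℕ`
fixing everything outside `A`. -/
def reluctantExt {A B : Finset ℕ} (f : {x // x ∈ A} → {x // x ∈ A ∪ B}) : ℕ → ℕ :=
  fun x => if h : x ∈ A then (f ⟨x, h⟩ : ℕ) else x

/-- The number of cycles in the functional digraph of a reluctant function, counted via
minimal representatives: elements of `A` lying on a cycle that are minimal among the
iterates in their cycle. -/
noncomputable def cycleCount {A B : Finset ℕ} (f : {x // x ∈ A} → {x // x ∈ A ∪ B}) : ℕ :=
  {x : ℕ | x ∈ A ∧ (∃ n : ℕ, 0 < n ∧ (reluctantExt f)^[n] x = x) ∧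
    ∀ k : ℕ, x ≤ (reluctantExt f)^[k] x}.ncard

set_option linter.dupNamespace false

namespace MR

def cycSet (A : Finset ℕ) (F : ℕ → ℕ) : Set ℕ :=
  {x : ℕ | x ∈ A ∧ (∃ n : ℕ, 0 < n ∧ F^[n] x = x) ∧ ∀ k : ℕ, x ≤ F^[k] x}

def RSet (A B : Finset ℕ) : Set (ℕ → ℕ) :=
  {F | (∀ x ∈ A, F x ∈ A ∪ B) ∧ (∀ x, x ∉ A → F x = x) ∧ Set.InjOn F A}

lemma finite_RSet (A B : Finset ℕ) : (RSet A B).Finite := by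
  apply Set.Finite.subset (Set.finite_range (reluctantExt (A := A) (B := B)))
  rintro F ⟨h1, h2, h3⟩
  refine ⟨fun x => ⟨F x.1, by simpa using h1 x.1 x.2⟩, ?_⟩
  funext x
  unfold reluctantExt
  split
  · rfl
  · exact (h2 x (by assumption)).symm

lemma reluctantExt_mem_apply {A B : Finset ℕ} (f : {x // x ∈ A} → {x // x ∈ A ∪ B})
    {x : ℕ} (hx : x ∈ A) : reluctantExt f x = (f ⟨x, hx⟩ : ℕ) := by
  unfold reluctantExt; rw [dif_pos hx]

lemma reluctantExt_notMem {A B : Finset ℕ} (f : {x // x ∈ A} → {x // x ∈ A ∪ B})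
    {x : ℕ} (hx : x ∉ A) : reluctantExt f x = x := by
  unfold reluctantExt; rw [dif_neg hx]

lemma sum_eq_sum_RSet (A B : Finset ℕ) (φ : (ℕ → ℕ) → Polynomial ℚ) :
    ∑ f ∈ Finset.univ.filter
      (fun f : {x // x ∈ A} → {x // x ∈ A ∪ B} => Function.Injective f),
      φ (reluctantExt f)
    = ∑ F ∈ (finite_RSet A B).toFinset, φ F := by
  apply Finset.sum_bij (fun f _ => reluctantExt f)
  · intro f hf
    simp only [Finset.mem_filter] at hf
    simp only [Set.Finite.mem_toFinset]
    refine ⟨fun x hx => ?_, fun x hx => reluctantExt_notMem f hx, ?_⟩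
    · rw [reluctantExt_mem_apply f hx]; exact (f ⟨x, hx⟩).2
    · intro a ha b hb hab
      rw [reluctantExt_mem_apply f ha, reluctantExt_mem_apply f hb] at hab
      have := hf.2 (Subtype.ext hab)
      exact congrArg Subtype.val this
  · intro f hf g hg hfg
    funext x
    apply Subtype.ext
    have := congrFun hfg x.1
    rwa [reluctantExt_mem_apply f x.2, reluctantExt_mem_apply g x.2] at this
  · intro F hF
    simp only [Set.Finite.mem_toFinset] at hF
    obtain ⟨h1, h2, h3⟩ := hF
    refine ⟨fun x => ⟨F x.1, by simpa using h1 x.1 x.2⟩, ?_, ?_⟩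
    · simp only [Finset.mem_filter, Finset.mem_univ, true_and]
      intro a b hab
      exact Subtype.ext (h3 a.2 b.2 (congrArg Subtype.val hab))
    · funext x
      by_cases hx : x ∈ A
      · rw [reluctantExt_mem_apply _ hx]
      · rw [reluctantExt_notMem _ hx]; exact (h2 x hx).symm
  · intro f hf; rfl



/-- iterates of a fixed point stay fixed -/
lemma iter_fix {A' : Finset ℕ} {G : ℕ → ℕ} (hGfix : ∀ x, x ∉ A' → G x = x)
    {x : ℕ} (hx : x ∉ A') : ∀ t, G^[t] x = x := by
  intro t
  induction t with
  | zero => rfl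
  | succ t ih => rw [Function.iterate_succ_apply', ih, hGfix x hx]

lemma iter_eqG {G : ℕ → ℕ} {m v x k : ℕ} (h : ∀ l, l < k → G^[l] x ≠ m) :
    (Function.update G m v)^[k] x = G^[k] x := by
  induction k with
  | zero => rfl
  | succ k ih =>
    rw [Function.iterate_succ_apply', Function.iterate_succ_apply',
      ih (fun l hl => h l (Nat.lt_succ_of_lt hl)),
      Function.update_of_ne (h k (Nat.lt_succ_self k))]

lemma iter_eqF {G : ℕ → ℕ} {m v x k : ℕ}
    (h : ∀ l, l < k → (Function.update G m v)^[l] x ≠ m) :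
    (Function.update G m v)^[k] x = G^[k] x := by
  induction k with
  | zero => rfl
  | succ k ih =>
    have he := ih (fun l hl => h l (Nat.lt_succ_of_lt hl))
    rw [Function.iterate_succ_apply', Function.iterate_succ_apply', he, ← he,
      Function.update_of_ne (h k (Nat.lt_succ_self k)), he]

/-- if m is F-periodic then v reaches m under G -/
lemma newCyc_of_per {G : ℕ → ℕ} {m v n : ℕ} (hn : 0 < n)
    (hper : (Function.update G m v)^[n] m = m) : ∃ k, G^[k] v = m := by
  induction n using Nat.strong_induction_on with
  | _ n ih =>
    by_cases hs : ∃ j, 0 < j ∧ j < n ∧ (Function.update G m v)^[j] m = m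
    · obtain ⟨j, hj1, hj2, hj3⟩ := hs
      exact ih j hj2 hj1 hj3
    · push_neg at hs
      have hfv : ∀ l, (Function.update G m v)^[l] v = (Function.update G m v)^[l+1] m := by
        intro l
        rw [Function.iterate_succ_apply, Function.update_self]
      have hvne : ∀ l, l < n - 1 → (Function.update G m v)^[l] v ≠ m := by
        intro l hl
        rw [hfv]
        exact hs (l+1) (Nat.succ_pos l) (by omega)
      refine ⟨n - 1, ?_⟩
      rw [← iter_eqF hvne, hfv, show n - 1 + 1 = n by omega, hper]

/-- if v reaches m under G then m is F-periodic -/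
lemma per_of_newCyc {G : ℕ → ℕ} {m v k : ℕ} (hk : G^[k] v = m) :
    ∃ n, 0 < n ∧ (Function.update G m v)^[n] m = m := by
  induction k using Nat.strong_induction_on with
  | _ k ih =>
    by_cases hs : ∃ l, l < k ∧ G^[l] v = m
    · obtain ⟨l, hl1, hl2⟩ := hs
      exact ih l hl1 hl2
    · push_neg at hs
      refine ⟨k + 1, Nat.succ_pos _, ?_⟩
      rw [Function.iterate_succ_apply, Function.update_self, iter_eqG hs, hk]

/-- G-periodic points of A' never reach m -/
lemma Gper_ne_m {A' : Finset ℕ} {G : ℕ → ℕ} {m x n k : ℕ}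
    (hmA' : m ∉ A') (hGfix : ∀ x, x ∉ A' → G x = x)
    (hx : x ∈ A') (hn : 0 < n) (hper : G^[n] x = x) : G^[k] x ≠ m := by
  intro hk
  obtain ⟨c, hc⟩ : ∃ c, k ≤ c * n := ⟨k, Nat.le_mul_of_pos_right k hn⟩
  have h1 : G^[c * n] x = x := by
    rw [Nat.mul_comm, Function.iterate_mul]
    exact Function.iterate_fixed hper c
  have h2 : G^[c * n] x = m := by
    rw [show c * n = (c * n - k) + k by omega, Function.iterate_add_apply, hk]
    exact iter_fix hGfix hmA' _
  rw [h1] at h2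
  exact hmA' (h2 ▸ hx)
open Classical in
lemma ncard_cycSet_update {A A' : Finset ℕ} {m v : ℕ} {G F : ℕ → ℕ}
    (hm : m ∈ A) (hA' : A' = A.erase m)
    (hGfix : ∀ x, x ∉ A' → G x = x) (hF : F = Function.update G m v) :
    (cycSet A F).ncard = (cycSet A' G).ncard + (if ∃ k, G^[k] v = m then 1 else 0) := by
  classical
  have hmA' : m ∉ A' := by rw [hA']; exact Finset.notMem_erase m A
  have hsub : A' ⊆ A := by rw [hA']; exact Finset.erase_subset m A
  have hFfix : ∀ x, x ∉ A → F x = x := by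
    intro x hx
    have hxm : x ≠ m := fun h => hx (h ▸ hm)
    rw [hF, Function.update_of_ne hxm]
    exact hGfix x (fun h => hx (hsub h))
  have iterG : ∀ {x k : ℕ}, (∀ l, l < k → G^[l] x ≠ m) → F^[k] x = G^[k] x := by
    intro x k h; rw [hF]; exact iter_eqG h
  have iterF : ∀ {x k : ℕ}, (∀ l, l < k → F^[l] x ≠ m) → F^[k] x = G^[k] x := by
    intro x k h; rw [hF] at h ⊢; exact iter_eqF h
  set New : Set ℕ :=
    {x | x ∈ A ∧ (∃ n, 0 < n ∧ F^[n] x = x) ∧ (∀ k, x ≤ F^[k] x) ∧ ∃ k, F^[k] x = m}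
    with hNew
  -- decomposition
  have hdecomp : cycSet A F = cycSet A' G ∪ New := by
    ext x
    constructor
    · rintro ⟨hxA, ⟨n, hn, hper⟩, hmin⟩
      by_cases hc : ∃ k, F^[k] x = m
      · exact Or.inr ⟨hxA, ⟨n, hn, hper⟩, hmin, hc⟩
      · push_neg at hc
        have heq : ∀ k, F^[k] x = G^[k] x := fun k => iterF (fun l _ => hc l)
        refine Or.inl ⟨?_, ⟨n, hn, ?_⟩, fun k => ?_⟩
        · rw [hA', Finset.mem_erase]
          exact ⟨by simpa using hc 0, hxA⟩
        · rw [← heq n]; exact hper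
        · rw [← heq k]; exact hmin k
    · rintro (⟨hxA', ⟨n, hn, hper⟩, hmin⟩ | ⟨hxA, hper, hmin, _⟩)
      · have hne : ∀ k, G^[k] x ≠ m := fun k => Gper_ne_m hmA' hGfix hxA' hn hper
        have heq : ∀ k, F^[k] x = G^[k] x := fun k => iterG (fun l _ => hne l)
        refine ⟨hsub hxA', ⟨n, hn, ?_⟩, fun k => ?_⟩
        · rw [heq n]; exact hper
        · rw [heq k]; exact hmin k
      · exact ⟨hxA, hper, hmin⟩
  have hdisj : Disjoint (cycSet A' G) New := by
    rw [Set.disjoint_left]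
    rintro x ⟨hxA', ⟨n, hn, hper⟩, -⟩ ⟨-, -, -, k, hk⟩
    have hne : ∀ k, G^[k] x ≠ m := fun k => Gper_ne_m hmA' hGfix hxA' hn hper
    have heq : ∀ k, F^[k] x = G^[k] x := fun k => iterG (fun l _ => hne l)
    exact hne k (by rw [← heq k]; exact hk)
  have hOldfin : (cycSet A' G).Finite :=
    Set.Finite.subset A'.finite_toSet (fun x hx => hx.1)
  have hNewfin : New.Finite :=
    Set.Finite.subset A.finite_toSet (fun x hx => hx.1)
  rw [hdecomp, Set.ncard_union_eq hdisj hOldfin hNewfin]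
  congr 1
  -- counting New
  by_cases hnc : ∃ k, G^[k] v = m
  · rw [if_pos hnc]
    obtain ⟨k0, hk0⟩ := hnc
    obtain ⟨n0, hn0, hFn0⟩ : ∃ n, 0 < n ∧ F^[n] m = m := by
      rw [hF]; exact per_of_newCyc hk0
    set Orb : Set ℕ := {y | ∃ t, F^[t] m = y} with hOrb
    have hfixm : ∀ c, F^[c * n0] m = m := by
      intro c
      rw [Nat.mul_comm, Function.iterate_mul]
      exact Function.iterate_fixed hFn0 c
    have O3 : ∀ y ∈ Orb, ∃ s, F^[s] y = m := by
      rintro y ⟨t, ht⟩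
      refine ⟨t * n0 - t, ?_⟩
      have hle : t ≤ t * n0 := Nat.le_mul_of_pos_right t hn0
      rw [← ht, ← Function.iterate_add_apply, show t * n0 - t + t = t * n0 by omega]
      exact hfixm t
    have O4 : ∀ y ∈ Orb, y ∈ A := by
      intro y hy
      by_contra hyA
      obtain ⟨s, hs⟩ := O3 y hy
      rw [iter_fix hFfix hyA] at hs
      exact hyA (hs ▸ hm)
    have O5 : ∀ y ∈ Orb, ∃ n, 0 < n ∧ F^[n] y = y := by
      rintro y hy
      obtain ⟨t, ht⟩ := hy
      obtain ⟨s, hs⟩ := O3 y ⟨t, ht⟩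
      refine ⟨t + (n0 + s), by omega, ?_⟩
      rw [Function.iterate_add_apply, Function.iterate_add_apply, hs,
        show F^[n0] m = m from hFn0, ht]
    have O2 : ∀ y ∈ Orb, ∀ k, F^[k] y ∈ Orb := by
      rintro y ⟨t, ht⟩ k
      exact ⟨k + t, by rw [Function.iterate_add_apply, ht]⟩
    have hNewOrb : New = {x | x ∈ Orb ∧ ∀ k, x ≤ F^[k] x} := by
      ext x
      constructor
      · rintro ⟨hxA, ⟨n, hn, hper⟩, hmin, k, hk⟩
        refine ⟨⟨(k + 1) * n - k, ?_⟩, hmin⟩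
        have hle : k + 1 ≤ (k + 1) * n := Nat.le_mul_of_pos_right _ hn
        rw [← hk, ← Function.iterate_add_apply,
          show (k + 1) * n - k + k = (k + 1) * n by omega,
          Nat.mul_comm, Function.iterate_mul]
        exact Function.iterate_fixed hper (k + 1)
      · rintro ⟨hxO, hmin⟩
        exact ⟨O4 x hxO, O5 x hxO, hmin, O3 x hxO⟩
    have hOrbne : Orb.Nonempty := ⟨m, 0, rfl⟩
    have hx0 : sInf Orb ∈ Orb := Nat.sInf_mem hOrbne
    have hsingle : New = {sInf Orb} := by
      rw [hNewOrb]
      ext x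
      simp only [Set.mem_setOf_eq, Set.mem_singleton_iff]
      constructor
      · rintro ⟨hxO, hmin⟩
        refine le_antisymm ?_ (Nat.sInf_le hxO)
        obtain ⟨t, ht⟩ := hx0
        obtain ⟨s, hs⟩ := O3 x hxO
        calc x ≤ F^[t + s] x := hmin (t + s)
        _ = sInf Orb := by rw [Function.iterate_add_apply, hs, ht]
      · rintro rfl
        exact ⟨hx0, fun k => Nat.sInf_le (O2 _ hx0 k)⟩
    rw [hsingle, Set.ncard_singleton]
  · rw [if_neg hnc, Set.ncard_eq_zero hNewfin]
    ext x
    simp only [Set.mem_empty_iff_false, iff_false]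
    rintro ⟨hxA, ⟨n, hn, hper⟩, hmin, k, hk⟩
    apply hnc
    have hperm : F^[n] m = m := by
      calc F^[n] m = F^[n] (F^[k] x) := by rw [hk]
        _ = F^[k] (F^[n] x) := by
            rw [← Function.iterate_add_apply, ← Function.iterate_add_apply, Nat.add_comm]
        _ = m := by rw [hper, hk]
    rw [hF] at hperm
    exact newCyc_of_per hn hperm
section Uniq
variable {A A' B : Finset ℕ} {m : ℕ} {G : ℕ → ℕ}

lemma chain_mem (hGfix : ∀ x, x ∉ A' → G x = x) {w l j : ℕ} (hl : G^[l] w = m)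
    (hleast : ∀ j', j' < l → G^[j'] w ≠ m) (hj : j < l) : G^[j] w ∈ A' := by
  by_contra h
  apply hleast j hj
  rw [← hl, show l = (l - j) + j by omega, Function.iterate_add_apply,
    iter_fix hGfix h]

lemma back_unique (hGfix : ∀ x, x ∉ A' → G x = x) (hGinj : Set.InjOn G A') :
    ∀ k a b, G^[k] a = m → G^[k] b = m → (∀ j, j < k → G^[j] a ≠ m) →
      (∀ j, j < k → G^[j] b ≠ m) → a = b := by
  intro k
  induction k with
  | zero =>
    intro a b ha hb _ _
    simp only [Function.iterate_zero_apply] at ha hb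
    rw [ha, hb]
  | succ k ih =>
    intro a b ha hb ha' hb'
    have haA' : a ∈ A' := chain_mem hGfix ha ha' (Nat.succ_pos k)
    have hbA' : b ∈ A' := chain_mem hGfix hb hb' (Nat.succ_pos k)
    refine hGinj haA' hbA' (ih (G a) (G b) ?_ ?_ ?_ ?_)
    · rw [← Function.iterate_succ_apply]; exact ha
    · rw [← Function.iterate_succ_apply]; exact hb
    · intro j hj; rw [← Function.iterate_succ_apply]; exact ha' (j+1) (by omega)
    · intro j hj; rw [← Function.iterate_succ_apply]; exact hb' (j+1) (by omega)

lemma reach_eq (hGfix : ∀ x, x ∉ A' → G x = x) (hGinj : Set.InjOn G A')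
    {v w kv kw : ℕ} (hle : kv ≤ kw) (hvim : v ∉ A'.image G)
    (hkv : G^[kv] v = m) (hkv' : ∀ j, j < kv → G^[j] v ≠ m)
    (hkw : G^[kw] w = m) (hkw' : ∀ j, j < kw → G^[j] w ≠ m) : v = w := by
  have hb : G^[kv] (G^[kw - kv] w) = m := by
    rw [← Function.iterate_add_apply, show kv + (kw - kv) = kw by omega]
    exact hkw
  have hb' : ∀ j, j < kv → G^[j] (G^[kw - kv] w) ≠ m := by
    intro j hj
    rw [← Function.iterate_add_apply]
    exact hkw' (j + (kw - kv)) (by omega)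
  have hvw := back_unique hGfix hGinj kv v (G^[kw - kv] w) hkv hb hkv' hb'
  rcases Nat.eq_or_lt_of_le hle with h | h
  · rw [hvw, ← h, Nat.sub_self]
    simp
  · exfalso
    apply hvim
    rw [Finset.mem_image]
    refine ⟨G^[kw - kv - 1] w, chain_mem hGfix hkw hkw' (by omega), ?_⟩
    have h5 : G (G^[kw - kv - 1] w) = G^[kw - kv - 1 + 1] w :=
      (Function.iterate_succ_apply' G _ w).symm
    rw [h5, show kw - kv - 1 + 1 = kw - kv by omega]
    exact hvw.symm

lemma existsUnique_v (hm : m ∈ A) (hA' : A' = A.erase m)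
    (hGfix : ∀ x, x ∉ A' → G x = x) (hGinj : Set.InjOn G A') :
    ∃! p, p ∈ (A ∪ B) \ A'.image G ∧ ∃ k, G^[k] p = m := by
  classical
  have hmA' : m ∉ A' := by rw [hA']; exact Finset.notMem_erase m A
  have hsub : A' ⊆ A := by rw [hA']; exact Finset.erase_subset m A
  set Pfin : Finset ℕ := (insert m A').filter (fun y => ∃ k, G^[k] y = m) with hPfin
  have hmP : m ∈ Pfin := by
    rw [hPfin, Finset.mem_filter]
    exact ⟨Finset.mem_insert_self m A', 0, rfl⟩
  have hd : ∀ y (hy : ∃ k, G^[k] y = m), True := fun _ _ => trivial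
  obtain ⟨p, hpP, hpmax⟩ := Finset.exists_max_image Pfin
    (fun y => if hy : ∃ k, G^[k] y = m then Nat.find hy else 0) ⟨m, hmP⟩
  rw [hPfin, Finset.mem_filter] at hpP
  obtain ⟨hpA, hpreach⟩ := hpP
  have hpAB : p ∈ A ∪ B := by
    rcases Finset.mem_insert.mp hpA with h | h
    · exact Finset.mem_union_left B (h ▸ hm)
    · exact Finset.mem_union_left B (hsub h)
  have hpim : p ∉ A'.image G := by
    intro him
    rw [Finset.mem_image] at him
    obtain ⟨x, hxA', hGx⟩ := him
    have hxreach : ∃ k, G^[k] x = m := by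
      refine ⟨Nat.find hpreach + 1, ?_⟩
      rw [Function.iterate_succ_apply, hGx]
      exact Nat.find_spec hpreach
    have hxP : x ∈ Pfin := by
      rw [hPfin, Finset.mem_filter]
      exact ⟨Finset.mem_insert_of_mem hxA', hxreach⟩
    have hxne : Nat.find hxreach ≠ 0 := by
      intro h0
      have : x = m := by
        have := Nat.find_spec hxreach
        rwa [h0] at this
      exact hmA' (this ▸ hxA')
    have hstep : G^[Nat.find hxreach - 1] p = m := by
      rw [← hGx, ← Function.iterate_succ_apply,
        show (Nat.find hxreach - 1).succ = Nat.find hxreach by omega]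
      exact Nat.find_spec hxreach
    have h1 : Nat.find hpreach ≤ Nat.find hxreach - 1 := Nat.find_le hstep
    have h2 := hpmax x hxP
    rw [dif_pos hpreach, dif_pos hxreach] at h2
    omega
  refine ⟨p, ⟨Finset.mem_sdiff.mpr ⟨hpAB, hpim⟩, hpreach⟩, ?_⟩
  rintro w ⟨hwV, hwreach⟩
  rw [Finset.mem_sdiff] at hwV
  rcases le_total (Nat.find hwreach) (Nat.find hpreach) with h | h
  · exact reach_eq hGfix hGinj h hwV.2 (Nat.find_spec hwreach)
      (fun j hj => Nat.find_min hwreach hj) (Nat.find_spec hpreach)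
      (fun j hj => Nat.find_min hpreach hj)
  · exact (reach_eq hGfix hGinj h hpim (Nat.find_spec hpreach)
      (fun j hj => Nat.find_min hpreach hj) (Nat.find_spec hwreach)
      (fun j hj => Nat.find_min hwreach hj)).symm
end Uniq
open Polynomial in
open Classical in
lemma sum_over_V {A A' B : Finset ℕ} {m : ℕ} {G : ℕ → ℕ}
    (hAB : Disjoint A B) (hm : m ∈ A) (hA' : A' = A.erase m)
    (hGfix : ∀ x, x ∉ A' → G x = x) (hGinj : Set.InjOn G A')
    (hGmaps : ∀ x ∈ A', G x ∈ A ∪ B) :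
    ∑ v ∈ (A ∪ B) \ A'.image G, (if ∃ k, G^[k] v = m then (X : ℚ[X]) else 1)
      = X + C (B.card : ℚ) := by
  obtain ⟨p, hp, hpuniq⟩ := existsUnique_v (B := B) hm hA' hGfix hGinj
  have hfilter : ((A ∪ B) \ A'.image G).filter (fun v => ∃ k, G^[k] v = m) = {p} := by
    ext w
    simp only [Finset.mem_filter, Finset.mem_singleton]
    constructor
    · rintro ⟨h1, h2⟩; exact hpuniq w ⟨h1, h2⟩
    · rintro rfl; exact hp
  have hcard : ((A ∪ B) \ A'.image G).card = B.card + 1 := by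
    have him : A'.image G ⊆ A ∪ B := Finset.image_subset_iff.mpr hGmaps
    have h1 := Finset.card_sdiff_of_subset him
    have h2 : (A'.image G).card = A'.card := Finset.card_image_of_injOn hGinj
    have h3 : (A ∪ B).card = A.card + B.card := Finset.card_union_of_disjoint hAB
    have h4 : A'.card = A.card - 1 := by rw [hA']; exact Finset.card_erase_of_mem hm
    have h5 : 1 ≤ A.card := Finset.card_pos.mpr ⟨m, hm⟩
    have h6 : A'.card ≤ A.card := by rw [hA']; exact Finset.card_le_card (Finset.erase_subset m A)
    omega
  rw [Finset.sum_ite, Finset.sum_const, Finset.sum_const, hfilter, Finset.card_singleton]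
  have hcard2 : (((A ∪ B) \ A'.image G).filter (fun v => ¬∃ k, G^[k] v = m)).card = B.card := by
    have := Finset.card_filter_add_card_filter_not
      (s := (A ∪ B) \ A'.image G) (p := fun v => ∃ k, G^[k] v = m)
    rw [hfilter] at this
    simp only [Finset.card_singleton] at this
    omega
  rw [hcard2, one_smul, nsmul_eq_mul, mul_one]
  norm_num

open Polynomial in
open Classical in
lemma sum_RSet_step {A A' B B' : Finset ℕ} {m : ℕ}
    (hm : m ∈ A) (hA' : A' = A.erase m) (hB' : B' = insert m B) :
    ∑ F ∈ (finite_RSet A B).toFinset, (X : ℚ[X]) ^ (cycSet A F).ncard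
    = ∑ G ∈ (finite_RSet A' B').toFinset, ∑ v ∈ (A ∪ B) \ A'.image G,
        (X : ℚ[X]) ^ (cycSet A' G).ncard * (if ∃ k, G^[k] v = m then X else 1) := by
  have hmA' : m ∉ A' := by rw [hA']; exact Finset.notMem_erase m A
  have hsub : A' ⊆ A := by rw [hA']; exact Finset.erase_subset m A
  have hUeq : A' ∪ B' = A ∪ B := by
    ext y
    by_cases hy : y = m
    · subst hy; simp [hA', hB', hm]
    · simp [hA', hB', hy]
  rw [Finset.sum_sigma']
  have memR : ∀ {C D : Finset ℕ} {F : ℕ → ℕ}, F ∈ (finite_RSet C D).toFinset ↔ F ∈ RSet C D :=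
    fun {C D F} => Set.Finite.mem_toFinset _
  apply Finset.sum_nbij' (i := fun F => ⟨Function.update F m m, F m⟩)
    (j := fun Gv => Function.update Gv.1 m Gv.2)
  -- hi : forward map lands in the sigma set
  · intro F hF
    rw [memR] at hF
    obtain ⟨hF1, hF2, hF3⟩ := hF
    have hGfix' : ∀ x, x ∉ A' → Function.update F m m x = x := by
      intro x hx
      by_cases hxm : x = m
      · rw [hxm]; simp
      · rw [Function.update_of_ne hxm]
        apply hF2
        rw [hA'] at hx
        intro hxA
        exact hx (Finset.mem_erase.mpr ⟨hxm, hxA⟩)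
    have hGA' : ∀ x ∈ A', Function.update F m m x = F x := by
      intro x hx
      have hne : x ≠ m := by intro h; rw [h] at hx; exact hmA' hx
      exact Function.update_of_ne hne _ _
    rw [Finset.mem_sigma, memR]
    dsimp only
    refine ⟨⟨?_, hGfix', ?_⟩, ?_⟩
    · intro x hx
      rw [hGA' x hx, hUeq]
      exact hF1 x (hsub hx)
    · intro a ha b hb hab
      rw [hGA' a ha, hGA' b hb] at hab
      exact hF3 (hsub ha) (hsub hb) hab
    · rw [Finset.mem_sdiff]
      refine ⟨hF1 m hm, ?_⟩
      rw [Finset.mem_image]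
      rintro ⟨x, hx, hFx⟩
      rw [hGA' x hx] at hFx
      have hxm := hF3 (hsub hx) hm hFx
      rw [hxm] at hx
      exact hmA' hx
  -- hj : backward map lands in RSet A B
  · rintro ⟨G, v⟩ hGv
    dsimp only
    rw [Finset.mem_sigma, memR] at hGv
    obtain ⟨⟨hG1, hG2, hG3⟩, hv⟩ := hGv
    rw [Finset.mem_sdiff] at hv
    obtain ⟨hvAB, hvim⟩ := hv
    rw [memR]
    refine ⟨?_, ?_, ?_⟩
    · intro x hx
      by_cases hxm : x = m
      · rw [hxm, Function.update_self]; exact hvAB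
      · rw [Function.update_of_ne hxm, ← hUeq]
        exact hG1 x (by rw [hA']; exact Finset.mem_erase.mpr ⟨hxm, hx⟩)
    · intro x hx
      have hxm : x ≠ m := fun h => hx (h ▸ hm)
      rw [Function.update_of_ne hxm]
      exact hG2 x (fun h => hx (hsub h))
    · intro a ha b hb hab
      simp only [Finset.mem_coe] at ha hb
      by_cases ham : a = m <;> by_cases hbm : b = m
      · rw [ham, hbm]
      · exfalso
        rw [ham, Function.update_self, Function.update_of_ne hbm] at hab
        apply hvim
        rw [Finset.mem_image]
        exact ⟨b, by rw [hA']; exact Finset.mem_erase.mpr ⟨hbm, hb⟩, hab.symm⟩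
      · exfalso
        rw [hbm, Function.update_self, Function.update_of_ne ham] at hab
        apply hvim
        rw [Finset.mem_image]
        exact ⟨a, by rw [hA']; exact Finset.mem_erase.mpr ⟨ham, ha⟩, hab⟩
      · rw [Function.update_of_ne ham, Function.update_of_ne hbm] at hab
        have ha' : a ∈ (A' : Set ℕ) := by
          simp only [Finset.mem_coe]; rw [hA']; exact Finset.mem_erase.mpr ⟨ham, ha⟩
        have hb' : b ∈ (A' : Set ℕ) := by
          simp only [Finset.mem_coe]; rw [hA']; exact Finset.mem_erase.mpr ⟨hbm, hb⟩
        exact hG3 ha' hb' hab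
  -- left_inv
  · intro F hF
    show Function.update (Function.update F m m) m (F m) = F
    rw [Function.update_idem]
    exact Function.update_eq_self m F
  -- right_inv
  · rintro ⟨G, v⟩ hGv
    rw [Finset.mem_sigma, memR] at hGv
    obtain ⟨⟨hG1, hG2, hG3⟩, hv⟩ := hGv
    have hGm : G m = m := hG2 m hmA'
    have h1 : Function.update (Function.update G m v) m m = G := by
      rw [Function.update_idem]
      funext x
      by_cases hxm : x = m
      · rw [hxm, Function.update_self]; exact hGm.symm
      · rw [Function.update_of_ne hxm]
    have h2 : Function.update G m v m = v := by simp
    show (⟨Function.update (Function.update G m v) m m,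
      Function.update G m v m⟩ : Σ _ : ℕ → ℕ, ℕ) = ⟨G, v⟩
    rw [h1, h2]
  -- values
  · intro F hF
    dsimp only
    rw [memR] at hF
    obtain ⟨hF1, hF2, hF3⟩ := hF
    have hGfix' : ∀ x, x ∉ A' → Function.update F m m x = x := by
      intro x hx
      by_cases hxm : x = m
      · rw [hxm]; simp
      · rw [Function.update_of_ne hxm]
        apply hF2
        rw [hA'] at hx
        intro hxA
        exact hx (Finset.mem_erase.mpr ⟨hxm, hxA⟩)
    have hFeq : F = Function.update (Function.update F m m) m (F m) := by
      rw [Function.update_idem, Function.update_eq_self]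
    rw [ncard_cycSet_update hm hA' hGfix' hFeq]
    by_cases hc : ∃ k, (Function.update F m m)^[k] (F m) = m
    · rw [if_pos hc, if_pos hc, pow_succ]
    · rw [if_neg hc, if_neg hc, Nat.add_zero, mul_one]
lemma union_erase_insert {A B : Finset ℕ} {m : ℕ} (hm : m ∈ A) :
    A.erase m ∪ insert m B = A ∪ B := by
  ext y
  by_cases hy : y = m
  · subst hy; simp [hm]
  · simp [hy]

open Polynomial in
open Classical in
lemma main : ∀ n (A B : Finset ℕ), Disjoint A B → A.card = n →
    ∑ F ∈ (finite_RSet A B).toFinset, (X : ℚ[X]) ^ (cycSet A F).ncard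
      = (ascPochhammer ℚ n).comp (X + C (B.card : ℚ)) := by
  intro n
  induction n with
  | zero =>
    intro A B hAB hcard
    rw [Finset.card_eq_zero] at hcard
    subst hcard
    have hR : (finite_RSet ∅ B).toFinset = {id} := by
      ext F
      rw [Set.Finite.mem_toFinset, Finset.mem_singleton]
      constructor
      · rintro ⟨-, h2, -⟩
        funext x
        exact h2 x (Finset.notMem_empty x)
      · rintro rfl
        exact ⟨fun x hx => absurd hx (Finset.notMem_empty x), fun x _ => rfl, Set.injOn_id _⟩
    rw [hR, Finset.sum_singleton]
    have hcyc : cycSet ∅ id = ∅ := by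
      ext x
      simp [cycSet]
    rw [hcyc, Set.ncard_empty, pow_zero, ascPochhammer_zero]
    simp
  | succ n ih =>
    intro A B hAB hcard
    obtain ⟨m, hm⟩ := Finset.card_pos.mp (by omega : 0 < A.card)
    have hmB : m ∉ B := Finset.disjoint_left.mp hAB hm
    have hd' : Disjoint (A.erase m) (insert m B) := by
      rw [Finset.disjoint_insert_right]
      exact ⟨Finset.notMem_erase m A,
        Finset.disjoint_of_subset_left (Finset.erase_subset m A) hAB⟩
    have hcard' : (A.erase m).card = n := by
      rw [Finset.card_erase_of_mem hm]; omega
    have hBcard : (insert m B).card = B.card + 1 := Finset.card_insert_of_notMem hmB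
    rw [sum_RSet_step hm rfl rfl]
    have step2 : ∀ G ∈ (finite_RSet (A.erase m) (insert m B)).toFinset,
        ∑ v ∈ (A ∪ B) \ (A.erase m).image G,
          (X : ℚ[X]) ^ (cycSet (A.erase m) G).ncard * (if ∃ k, G^[k] v = m then X else 1)
        = (X : ℚ[X]) ^ (cycSet (A.erase m) G).ncard * (X + C (B.card : ℚ)) := by
      intro G hG
      rw [Set.Finite.mem_toFinset] at hG
      obtain ⟨hG1, hG2, hG3⟩ := hG
      rw [← Finset.mul_sum]
      congr 1
      apply sum_over_V hAB hm rfl hG2 hG3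
      intro x hx
      have h := hG1 x hx
      rwa [union_erase_insert hm] at h
    rw [Finset.sum_congr rfl step2, ← Finset.sum_mul, ih _ _ hd' hcard', hBcard,
      ascPochhammer_succ_left, mul_comp, X_comp, Polynomial.comp_assoc, add_comp,
      X_comp, one_comp]
    push_cast
    rw [Polynomial.C_add, Polynomial.C_1]
    ring

end MR

/-- Mullin-Rota: for disjoint finite sets `A`, `B` with `|A| = i`, `|B| = j`, the sum over
all reluctant functions `f` from `A` to `B` (injective maps `A → A ∪ B`) of
`a^{number of cycles of f}` equals the rising factorial `(a + j)_i` as a polynomial in `a`. -/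
theorem sum_reluctant_functions_eq_ascPochhammer (A B : Finset ℕ) (hAB : Disjoint A B)
    (i j : ℕ) (hA : A.card = i) (hB : B.card = j) :
    ∑ f ∈ Finset.univ.filter
        (fun f : {x // x ∈ A} → {x // x ∈ A ∪ B} => Function.Injective f),
      (Polynomial.X : Polynomial ℚ) ^ cycleCount f
    = (ascPochhammer ℚ i).comp (Polynomial.X + Polynomial.C (j : ℚ)) := by
  subst hA hB
  have h1 := MR.sum_eq_sum_RSet A B (fun F => (X : ℚ[X]) ^ (MR.cycSet A F).ncard)
  have h2 := MR.main A.card A B hAB rfl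
  rw [← h2, ← h1]
  rfl
end
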